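/- Let m ≥ 1, f_m := D_{2^{2m+1}}^w − D_{2^{2m}}^w, and q_m := 2^{2m} + 2^{2m−2} + ⋯ + 2² + 2⁰. Then for every x ∈ G, |σ_{q_m}^κ f_m(x)| = (q_{m−1}/q_m) · |K_{q_{m−1}}^w(τ_{2m}(x))|. -/

import Mathlib

open MeasureTheory ENNReal

noncomputable section

/-- The Walsh group: countable product of copies of ℤ₂. -/
abbrev G : Type := ℕ → ZMod 2

instance : TopologicalSpace (ZMod 2) := ⊥
instance : DiscreteTopology (ZMod 2) := ⟨rfl⟩
instance : IsTopologicalAddGroup (ZMod 2) :=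
  { continuous_add := continuous_of_discreteTopology
    continuous_neg := continuous_of_discreteTopology }
instance : MeasurableSpace G := borel G
instance : BorelSpace G := ⟨rfl⟩

/-- The normalized Haar (= product) measure on `G`. -/
def μ : Measure G := Measure.addHaarMeasure (⊤ : TopologicalSpace.PositiveCompacts G)

/-- The `k`-th Rademacher function. -/
def rad (k : ℕ) (x : G) : ℝ := (-1 : ℝ) ^ (x k).val

/-- `|n| = ⌊log₂ n⌋`. -/
def lg (n : ℕ) : ℕ := Nat.log 2 n

/-- The Walsh–Paley functions. -/
def walsh (n : ℕ) (x : G) : ℝ :=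
  ∏ k ∈ Finset.range (n + 1), rad k x ^ (n.testBit k).toNat

/-- The Walsh–Kaczmarz functions. -/
def kacz (n : ℕ) (x : G) : ℝ :=
  if n = 0 then 1
  else rad (lg n) x *
    ∏ k ∈ Finset.range (lg n), rad (lg n - 1 - k) x ^ (n.testBit k).toNat

/-- Walsh–Paley Dirichlet kernel. -/
def DW (n : ℕ) (x : G) : ℝ := ∑ k ∈ Finset.range n, walsh k x

/-- Walsh–Kaczmarz Dirichlet kernel. -/
def DK (n : ℕ) (x : G) : ℝ := ∑ k ∈ Finset.range n, kacz k x

/-- Walsh–Paley Fejér kernel (with `KW 0 = 0`). -/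
def KW (n : ℕ) (x : G) : ℝ := (∑ k ∈ Finset.range n, DW k x) / n

/-- Walsh–Kaczmarz Fejér kernel. -/
def KK (n : ℕ) (x : G) : ℝ := (∑ k ∈ Finset.range n, DK k x) / n

/-- Reversal of the first `A` coordinates. -/
def tau (A : ℕ) (x : G) : G := fun k => if k < A then x (A - 1 - k) else x k

/-- Walsh–Fourier coefficients. -/
def coefW (f : G → ℝ) (i : ℕ) : ℝ := ∫ x, f x * walsh i x ∂μ

/-- Walsh–Kaczmarz–Fourier coefficients. -/
def coefK (f : G → ℝ) (i : ℕ) : ℝ := ∫ x, f x * kacz i x ∂μ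

/-- Partial sums of the Walsh–Fourier series. -/
def SW (f : G → ℝ) (M : ℕ) (x : G) : ℝ := ∑ i ∈ Finset.range M, coefW f i * walsh i x

/-- Partial sums of the Walsh–Kaczmarz–Fourier series. -/
def SK (f : G → ℝ) (M : ℕ) (x : G) : ℝ := ∑ i ∈ Finset.range M, coefK f i * kacz i x

/-- Fejér means of the Walsh–Kaczmarz–Fourier series. -/
def sigmaK (f : G → ℝ) (n : ℕ) (x : G) : ℝ := (∑ j ∈ Finset.range n, SK f j x) / n

/-- The dyadic martingale maximal function. -/
def fstar (f : G → ℝ) (x : G) : ℝ≥0∞ := ⨆ n : ℕ, ENNReal.ofReal |SW f (2 ^ n) x|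

/-- Dyadic interval of rank `n` around `x`. -/
def cyl (n : ℕ) (x : G) : Set G := {y : G | ∀ k < n, y k = x k}

/-- Dyadic interval `I_n` around `0`. -/
def In (n : ℕ) : Set G := cyl n 0

/-- `e t`: the element of `G` whose `t`-th coordinate is `1` and the rest are `0`. -/
def e (t : ℕ) : G := fun k => if k = t then 1 else 0

/-- `q_m = 2^{2m} + 2^{2m-2} + ⋯ + 2² + 2⁰`. -/
def qA (m : ℕ) : ℕ := ∑ i ∈ Finset.range (m + 1), 4 ^ i

/-- `f_m = D_{2^{2m+1}}^w − D_{2^{2m}}^w`. -/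
def fm (m : ℕ) (x : G) : ℝ := DW (2 ^ (2 * m + 1)) x - DW (2 ^ (2 * m)) x

/-- The weak `L^p` quasinorm `‖f‖_{L_{p,∞}} = sup_{λ>0} λ · μ{|f|>λ}^{1/p}`. -/
def wnorm (f : G → ℝ) (p : ℝ) : ℝ≥0∞ :=
  ⨆ (l : ℝ) (_ : 0 < l), ENNReal.ofReal l * μ {x : G | l < |f x|} ^ (1 / p)

/-- The set `J_N^{m,l}` (with `m : ℤ`, `-1 ≤ m ≤ l`). -/
def Jset (N l : ℕ) (m : ℤ) : Set G :=
  {x : G | (∀ j : ℕ, m < (j : ℤ) → j < l → x j = 0) ∧ x l = 1 ∧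
    (∀ j : ℕ, l < j → j < N → x j = 0) ∧ (0 ≤ m → x m.toNat = 1)}

/-! ### Auxiliary development -/

section Aux

open Finset

/-! #### Basic facts about `rad` -/

lemma zmod2_cases : ∀ z : ZMod 2, z = 0 ∨ z = 1 := by decide

lemma rad_eq_one_or (k : ℕ) (x : G) : rad k x = 1 ∨ rad k x = -1 := by
  unfold rad
  rcases Nat.even_or_odd (x k).val with h | h
  · left; exact h.neg_one_pow
  · right; exact h.neg_one_pow

lemma abs_rad (k : ℕ) (x : G) : |rad k x| = 1 := by
  rcases rad_eq_one_or k x with h | h <;> rw [h] <;> simp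

lemma rad_pow_even {c : ℕ} (h : Even c) (k : ℕ) (x : G) : rad k x ^ c = 1 := by
  rcases rad_eq_one_or k x with h1 | h1 <;> rw [h1]
  · simp
  · exact h.neg_one_pow

lemma continuous_rad (k : ℕ) : Continuous (rad k) := by
  have h1 : Continuous fun x : G => x k := continuous_apply k
  exact (continuous_of_discreteTopology
    (f := fun z : ZMod 2 => ((-1 : ℝ)) ^ z.val)).comp h1

/-! #### Measure instances -/

instance : CompactSpace G := by infer_instance

instance : μ.IsAddLeftInvariant := by unfold μ; infer_instance

instance : μ.IsAddRightInvariant := by unfold μ; infer_instance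

instance : IsProbabilityMeasure μ := by
  constructor
  rw [μ, ← TopologicalSpace.PositiveCompacts.coe_top (α := G)]
  exact MeasureTheory.Measure.addHaarMeasure_self

instance : μ.Regular := by unfold μ; infer_instance

lemma integrable_of_continuous {f : G → ℝ} (hf : Continuous f) :
    MeasureTheory.Integrable f μ := by
  apply hf.integrable_of_hasCompactSupport
  exact IsCompact.of_isClosed_subset isCompact_univ (isClosed_tsupport f)
    (Set.subset_univ _)

lemma continuous_prod_rad (N : ℕ) (c : ℕ → ℕ) :
    Continuous fun x : G => ∏ k ∈ Finset.range N, rad k x ^ c k := by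
  apply continuous_finset_prod
  intro k _
  exact (continuous_rad k).pow (c k)

/-! #### The key integral computation -/

lemma rad_add_e_self (t : ℕ) (x : G) : rad t (x + e t) = - rad t x := by
  have hx : (x + e t) t = x t + 1 := by simp [e]
  unfold rad
  rw [hx]
  rcases zmod2_cases (x t) with h | h <;> rw [h]
  · norm_num [ZMod.val_one]
  · rw [show ((1 : ZMod 2) + 1) = 0 by decide]
    norm_num [ZMod.val_one]

lemma rad_add_e_ne {k t : ℕ} (h : k ≠ t) (x : G) : rad k (x + e t) = rad k x := by
  have hx : (x + e t) k = x k := by simp [e, h]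
  unfold rad
  rw [hx]

lemma integral_prod_rad (N : ℕ) (c : ℕ → ℕ) :
    (∫ x, (∏ k ∈ Finset.range N, rad k x ^ c k) ∂μ) =
      if ∀ k ∈ Finset.range N, Even (c k) then 1 else 0 := by
  by_cases h : ∀ k ∈ Finset.range N, Even (c k)
  · rw [if_pos h]
    have h1 : ∀ x : G, (∏ k ∈ Finset.range N, rad k x ^ c k) = 1 := fun x =>
      Finset.prod_eq_one fun k hk => rad_pow_even (h k hk) k x
    simp only [h1, MeasureTheory.integral_const, measure_univ, ENNReal.toReal_one, probReal_univ,
      smul_eq_mul, one_mul]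
  · rw [if_neg h]
    push_neg at h
    obtain ⟨t, ht, hodd⟩ := h
    rw [Nat.not_even_iff_odd] at hodd
    set f : G → ℝ := fun x => ∏ k ∈ Finset.range N, rad k x ^ c k with hf
    have key : ∀ x, f (x + e t) = - f x := by
      intro x
      show (∏ k ∈ Finset.range N, rad k (x + e t) ^ c k)
        = -∏ k ∈ Finset.range N, rad k x ^ c k
      have h1 : (∏ k ∈ Finset.range N, rad k (x + e t) ^ c k) =
          ∏ k ∈ Finset.range N, (if k = t then -(rad k x ^ c k) else rad k x ^ c k) := by
        refine Finset.prod_congr rfl fun k _ => ?_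
        by_cases hk : k = t
        · subst hk
          rw [if_pos rfl, rad_add_e_self, hodd.neg_pow]
        · rw [if_neg hk, rad_add_e_ne hk]
      rw [h1, ← Finset.mul_prod_erase _ _ ht, if_pos rfl]
      rw [← Finset.mul_prod_erase _ (fun k => rad k x ^ c k) ht]
      rw [neg_mul]
      congr 1
      congr 1
      refine Finset.prod_congr rfl fun k hk => ?_
      rw [if_neg (Finset.ne_of_mem_erase hk)]
    have hint : MeasureTheory.Integrable f μ :=
      integrable_of_continuous (continuous_prod_rad N c)
    have h1 : (∫ x, f (x + e t) ∂μ) = ∫ x, f x ∂μ :=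
      MeasureTheory.integral_add_right_eq_self f (e t)
    have h2 : (∫ x, f (x + e t) ∂μ) = - ∫ x, f x ∂μ := by
      simp only [key]
      exact MeasureTheory.integral_neg f
    have := h1.symm.trans h2
    linarith

/-! #### Walsh and Kaczmarz functions as products of Rademacher functions -/

lemma prod_bit_ext (x : G) {n M M' : ℕ} (hM : M ≤ M') (h : n < 2 ^ M) :
    (∏ k ∈ Finset.range M', rad k x ^ (n.testBit k).toNat)
      = ∏ k ∈ Finset.range M, rad k x ^ (n.testBit k).toNat := by
  symm
  apply Finset.prod_subset (Finset.range_subset_range.2 hM)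
  intro k hk hkn
  have hMk : M ≤ k := by
    simp only [Finset.mem_range, not_lt] at hkn
    exact hkn
  have : n < 2 ^ k := lt_of_lt_of_le h (Nat.pow_le_pow_right (by norm_num) hMk)
  rw [Nat.testBit_lt_two_pow this]
  simp

lemma walsh_eq_prod {n N : ℕ} (h : n < 2 ^ N) (x : G) :
    walsh n x = ∏ k ∈ Finset.range N, rad k x ^ (n.testBit k).toNat := by
  have h1 : n < 2 ^ (n + 1) := lt_of_lt_of_le (Nat.lt_two_pow_self (n := n)) (Nat.pow_le_pow_right (by norm_num) (Nat.le_succ n))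
  rw [walsh]
  rw [← prod_bit_ext x (le_max_left (n + 1) N) h1,
      prod_bit_ext x (le_max_right (n + 1) N) h]

/-- Exponents of the Rademacher expansion of `kacz i` (for `i ≠ 0`). -/
def dexp (i j : ℕ) : ℕ :=
  if i = 0 then 0
  else if j = lg i then 1 else if j < lg i then (i.testBit (lg i - 1 - j)).toNat else 0

lemma dexp_le_one (i j : ℕ) : dexp i j ≤ 1 := by
  unfold dexp
  split_ifs <;> simp [Bool.toNat_le]

lemma kacz_eq_prod {i N : ℕ} (hN : lg i < N) (x : G) :
    kacz i x = ∏ j ∈ Finset.range N, rad j x ^ dexp i j := by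
  by_cases hi : i = 0
  · subst hi
    rw [kacz, if_pos rfl]
    symm
    apply Finset.prod_eq_one
    intro j _
    rw [dexp, if_pos rfl, pow_zero]
  rw [kacz, if_neg hi]
  have h1 : (∏ j ∈ Finset.range N, rad j x ^ dexp i j)
      = ∏ j ∈ Finset.range (lg i + 1), rad j x ^ dexp i j := by
    apply (Finset.prod_subset (Finset.range_subset_range.2 hN) ?_).symm
    intro j _ hj2
    have hj3 : lg i < j := by
      simp only [Finset.mem_range, not_lt] at hj2
      omega
    rw [dexp, if_neg hi, if_neg (by omega), if_neg (by omega), pow_zero]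
  rw [h1, Finset.prod_range_succ]
  have h2 : dexp i (lg i) = 1 := by rw [dexp, if_neg hi, if_pos rfl]
  rw [h2, pow_one, mul_comm]
  congr 1
  rw [← Finset.prod_range_reflect (fun j => rad j x ^ dexp i j) (lg i)]
  refine Finset.prod_congr rfl fun k hk => ?_
  simp only [Finset.mem_range] at hk
  have h3 : dexp i (lg i - 1 - k) = (i.testBit k).toNat := by
    rw [dexp, if_neg hi, if_neg (by omega), if_pos (by omega),
      show lg i - 1 - (lg i - 1 - k) = k from by omega]
  rw [h3]

/-! #### Bit manipulation lemmas -/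

lemma sum_bits_lt (b : ℕ → Bool) (A : ℕ) :
    (∑ t ∈ Finset.range A, (b t).toNat * 2 ^ t) < 2 ^ A := by
  induction A with
  | zero => simp
  | succ A ih =>
    rw [Finset.sum_range_succ]
    have h2 : (2 : ℕ) ^ (A + 1) = 2 ^ A + 2 ^ A := by ring
    rcases Bool.eq_false_or_eq_true (b A) with hb | hb <;> rw [hb] <;> simp <;> omega

lemma testBit_sum_bits (b : ℕ → Bool) (A : ℕ) (j : ℕ) :
    (∑ t ∈ Finset.range A, (b t).toNat * 2 ^ t).testBit j
      = if j < A then b j else false := by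
  induction A generalizing j with
  | zero => simp
  | succ A ih =>
    rw [Finset.sum_range_succ]
    rcases Bool.eq_false_or_eq_true (b A) with hbA | hbA
    case inr =>
      rw [hbA]
      simp only [Bool.toNat_false, zero_mul, add_zero]
      rw [ih j]
      by_cases hj : j < A
      · rw [if_pos hj, if_pos (by omega)]
      · by_cases hj2 : j = A
        · subst hj2
          rw [if_neg hj, if_pos (by omega), hbA]
        · rw [if_neg hj, if_neg (by omega)]
    case inl =>
      rw [hbA]
      simp only [Bool.toNat_true, one_mul]
      rw [add_comm]
      by_cases hj : j < A
      · rw [Nat.testBit_two_pow_add_gt hj, ih j, if_pos hj, if_pos (by omega)]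
      · by_cases hj2 : j = A
        · subst hj2
          rw [Nat.testBit_two_pow_add_eq, ih j, if_neg (lt_irrefl _), if_pos (by omega), hbA]
          rfl
        · have hjA : A + 1 ≤ j := by omega
          rw [if_neg (by omega)]
          apply Nat.testBit_lt_two_pow
          calc 2 ^ A + ∑ t ∈ Finset.range A, (b t).toNat * 2 ^ t
              < 2 ^ A + 2 ^ A := by have := sum_bits_lt b A; omega
            _ = 2 ^ (A + 1) := by ring
            _ ≤ 2 ^ j := Nat.pow_le_pow_right (by norm_num) hjA

lemma testBit_of_mem_block {A k : ℕ} (h1 : 2 ^ A ≤ k) (h2 : k < 2 ^ (A + 1)) :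
    k.testBit A = true := by
  have hk : k = 2 ^ A + (k - 2 ^ A) := by omega
  rw [hk, Nat.testBit_two_pow_add_eq]
  have : k - 2 ^ A < 2 ^ A := by
    have : (2:ℕ) ^ (A+1) = 2 ^ A + 2 ^ A := by ring
    omega
  rw [Nat.testBit_lt_two_pow this]
  rfl

end Aux

section Aux2

open Finset MeasureTheory

lemma toNat_injective {a b : Bool} (h : a.toNat = b.toNat) : a = b := by
  cases a <;> cases b <;> simp_all

lemma even_add_iff_of_le_one {a b : ℕ} (ha : a ≤ 1) (hb : b ≤ 1) :
    Even (a + b) ↔ a = b := by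
  rw [Nat.even_add, Nat.even_iff, Nat.even_iff]
  omega

lemma lg_le {i A : ℕ} (h : i < 2 ^ (A + 1)) : lg i ≤ A := by
  by_cases hi : i = 0
  · subst hi
    simp [lg]
  · have := Nat.log_lt_of_lt_pow hi h
    unfold lg
    omega

lemma lg_eq {i A : ℕ} (h1 : 2 ^ A ≤ i) (h2 : i < 2 ^ (A + 1)) : lg i = A :=
  Nat.log_eq_of_pow_le_of_lt_pow h1 h2

lemma continuous_walsh (n : ℕ) : Continuous (walsh n) := by
  unfold walsh
  apply continuous_finset_prod
  intro k _
  exact (continuous_rad k).pow _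

lemma continuous_kacz (n : ℕ) : Continuous (kacz n) := by
  have h : kacz n = fun x => ∏ j ∈ Finset.range (lg n + 1), rad j x ^ dexp n j :=
    funext fun x => kacz_eq_prod (Nat.lt_succ_self _) x
  rw [h]
  exact continuous_prod_rad _ _

lemma testBit_high {k A j : ℕ} (h : k < 2 ^ (A + 1)) (hj : A + 1 ≤ j) :
    k.testBit j = false :=
  Nat.testBit_lt_two_pow (lt_of_lt_of_le h (Nat.pow_le_pow_right (by norm_num) hj))

lemma walsh_mul_kacz_eq {A k i : ℕ} (hk : k < 2 ^ (A + 1)) (hi : i < 2 ^ (A + 1)) (x : G) :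
    walsh k x * kacz i x
      = ∏ j ∈ Finset.range (A + 1), rad j x ^ ((k.testBit j).toNat + dexp i j) := by
  have hlg : lg i < A + 1 := Nat.lt_succ_of_le (lg_le hi)
  rw [walsh_eq_prod hk x, kacz_eq_prod hlg x, ← Finset.prod_mul_distrib]
  exact Finset.prod_congr rfl fun j _ => (pow_add _ _ _).symm

lemma integral_walsh_mul_kacz_of {A k i : ℕ} (hk : k < 2 ^ (A + 1)) (hi : i < 2 ^ (A + 1))
    (h : ∀ j ∈ Finset.range (A + 1), (k.testBit j).toNat = dexp i j) :
    (∫ x, walsh k x * kacz i x ∂μ) = 1 := by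
  simp only [walsh_mul_kacz_eq hk hi]
  rw [integral_prod_rad, if_pos]
  intro j hj
  rw [even_add_iff_of_le_one (Bool.toNat_le _) (dexp_le_one i j)]
  exact h j hj

lemma integral_walsh_mul_kacz_not {A k i : ℕ} (hk : k < 2 ^ (A + 1)) (hi : i < 2 ^ (A + 1))
    (h : ¬ ∀ j ∈ Finset.range (A + 1), (k.testBit j).toNat = dexp i j) :
    (∫ x, walsh k x * kacz i x ∂μ) = 0 := by
  simp only [walsh_mul_kacz_eq hk hi]
  rw [integral_prod_rad, if_neg]
  intro hc
  apply h
  intro j hj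
  have h2 := hc j hj
  rwa [even_add_iff_of_le_one (Bool.toNat_le _) (dexp_le_one i j)] at h2

lemma coefK_fm (m : ℕ) {i : ℕ} (hi : i < 2 ^ (2 * m + 1)) :
    coefK (fm m) i = if 2 ^ (2 * m) ≤ i then 1 else 0 := by
  set A := 2 * m with hA
  have hpow : (2 : ℕ) ^ (A + 1) = 2 ^ A + 2 ^ A := by ring
  have hfm : ∀ x : G, fm m x = ∑ k ∈ Finset.Ico (2 ^ A) (2 ^ (A + 1)), walsh k x := by
    intro x
    rw [fm, Finset.sum_Ico_eq_sub _ (Nat.pow_le_pow_right (by norm_num) (Nat.le_succ A))]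
    rfl
  rw [coefK]
  have step1 : (∫ x, fm m x * kacz i x ∂μ)
      = ∑ k ∈ Finset.Ico (2 ^ A) (2 ^ (A + 1)), ∫ x, walsh k x * kacz i x ∂μ := by
    rw [← integral_finset_sum]
    · apply integral_congr_ae
      filter_upwards with x
      rw [hfm x, Finset.sum_mul]
    · intro k _
      exact integrable_of_continuous ((continuous_walsh k).mul (continuous_kacz i))
  rw [step1]
  by_cases hge : 2 ^ A ≤ i
  · rw [if_pos hge]
    have hi0 : i ≠ 0 := by have := Nat.two_pow_pos A; omega
    have hlgi : lg i = A := lg_eq hge hi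
    set s := ∑ j ∈ Finset.range A, (i.testBit (A - 1 - j)).toNat * 2 ^ j with hs_def
    have hs : s < 2 ^ A := sum_bits_lt _ A
    set k₀ := 2 ^ A + s with hk₀_def
    have hk₀mem : k₀ ∈ Finset.Ico (2 ^ A) (2 ^ (A + 1)) := by
      rw [Finset.mem_Ico]
      omega
    have hbit : ∀ j, j ≤ A → (k₀.testBit j).toNat = dexp i j := by
      intro j hj
      rcases Nat.lt_or_ge j A with hjA | hjA
      · rw [hk₀_def, Nat.testBit_two_pow_add_gt hjA, hs_def, testBit_sum_bits,
          if_pos hjA, dexp, if_neg hi0, if_neg (by omega), if_pos (by omega), hlgi]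
      · have hjA' : j = A := by omega
        subst hjA'
        rw [hk₀_def, Nat.testBit_two_pow_add_eq, hs_def, testBit_sum_bits,
          if_neg (lt_irrefl _), dexp, if_neg hi0, if_pos (by omega)]
        rfl
    have hcond : ∀ k ∈ Finset.Ico (2 ^ A) (2 ^ (A + 1)),
        ((∀ j ∈ Finset.range (A + 1), (k.testBit j).toNat = dexp i j) ↔ k = k₀) := by
      intro k hk
      rw [Finset.mem_Ico] at hk
      constructor
      · intro h
        apply Nat.eq_of_testBit_eq
        intro j
        rcases Nat.lt_or_ge j (A + 1) with hj | hj
        · apply toNat_injective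
          rw [h j (Finset.mem_range.2 hj), hbit j (by omega)]
        · rw [testBit_high hk.2 hj, testBit_high (by rw [Finset.mem_Ico] at hk₀mem; exact hk₀mem.2) hj]
      · intro h
        subst h
        intro j hj
        exact hbit j (by simp only [Finset.mem_range] at hj; omega)
    calc (∑ k ∈ Finset.Ico (2 ^ A) (2 ^ (A + 1)), ∫ x, walsh k x * kacz i x ∂μ)
        = ∑ k ∈ Finset.Ico (2 ^ A) (2 ^ (A + 1)), if k = k₀ then (1 : ℝ) else 0 := by
          refine Finset.sum_congr rfl fun k hk => ?_
          have hk2 : k < 2 ^ (A + 1) := by rw [Finset.mem_Ico] at hk; exact hk.2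
          by_cases hkk : k = k₀
          · rw [if_pos hkk]
            exact integral_walsh_mul_kacz_of hk2 hi ((hcond k hk).2 hkk)
          · rw [if_neg hkk]
            exact integral_walsh_mul_kacz_not hk2 hi (fun h => hkk ((hcond k hk).1 h))
      _ = 1 := by rw [Finset.sum_ite_eq' _ k₀ (fun _ => (1 : ℝ)), if_pos hk₀mem]
  · rw [if_neg hge]
    have hiA : i < 2 ^ A := by omega
    have hdA : dexp i A = 0 := by
      by_cases hi0 : i = 0
      · rw [dexp, if_pos hi0]
      · have : lg i < A := Nat.log_lt_of_lt_pow hi0 hiA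
        rw [dexp, if_neg hi0, if_neg (by omega), if_neg (by omega)]
    apply Finset.sum_eq_zero
    intro k hk
    rw [Finset.mem_Ico] at hk
    apply integral_walsh_mul_kacz_not hk.2 hi
    intro h
    have h2 := h A (Finset.mem_range.2 (Nat.lt_succ_self A))
    rw [testBit_of_mem_block hk.1 hk.2, hdA] at h2
    simp at h2

end Aux2

section Aux3

open Finset

lemma sum_sum_range (g : ℕ → ℝ) (q : ℕ) :
    ∑ j ∈ Finset.range q, ∑ i ∈ Finset.range j, g i
      = ∑ i ∈ Finset.range q, ((q - 1 - i : ℕ) : ℝ) * g i := by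
  induction q with
  | zero => simp
  | succ q ih =>
    have h1 : ∀ i ∈ Finset.range q, ((q + 1 - 1 - i : ℕ) : ℝ) * g i
        = ((q - 1 - i : ℕ) : ℝ) * g i + g i := by
      intro i hi
      simp only [Finset.mem_range] at hi
      have h2 : (q + 1 - 1 - i : ℕ) = (q - 1 - i) + 1 := by omega
      rw [h2]
      push_cast
      ring
    rw [Finset.sum_range_succ, ih,
      Finset.sum_range_succ (fun i => ((q + 1 - 1 - i : ℕ) : ℝ) * g i),
      Finset.sum_congr rfl h1, Finset.sum_add_distrib]
    simp

lemma qA_succ (t : ℕ) : qA (t + 1) = qA t + 4 ^ (t + 1) := by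
  rw [qA, Finset.sum_range_succ]
  rfl

lemma qA_lt (t : ℕ) : qA t < 2 * 4 ^ t := by
  induction t with
  | zero => simp [qA]
  | succ t ih =>
    rw [qA_succ]
    have h4 : (4 : ℕ) ^ (t + 1) = 4 * 4 ^ t := by ring
    omega

lemma qA_ge (t : ℕ) : 4 ^ t ≤ qA t := by
  rw [qA]
  exact Finset.single_le_sum (f := fun i => 4 ^ i) (fun i _ => Nat.zero_le _)
    (Finset.self_mem_range_succ t)

lemma kacz_shift {A i' : ℕ} (h : i' < 2 ^ A) (x : G) :
    kacz (2 ^ A + i') x = rad A x * walsh i' (tau A x) := by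
  have hpos := Nat.two_pow_pos A
  have hne : 2 ^ A + i' ≠ 0 := by omega
  have hlg : lg (2 ^ A + i') = A := by
    apply lg_eq (by omega)
    have : (2 : ℕ) ^ (A + 1) = 2 ^ A + 2 ^ A := by ring
    omega
  rw [kacz, if_neg hne, hlg]
  congr 1
  rw [walsh_eq_prod h (tau A x)]
  refine Finset.prod_congr rfl fun k hk => ?_
  simp only [Finset.mem_range] at hk
  rw [Nat.testBit_two_pow_add_gt hk]
  congr 1
  simp only [rad, tau]
  rw [if_pos hk]

lemma KW_mul (n : ℕ) (y : G) :
    (n : ℝ) * KW n y = ∑ i ∈ Finset.range n, ((n - 1 - i : ℕ) : ℝ) * walsh i y := by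
  rcases Nat.eq_zero_or_pos n with h | h
  · subst h
    simp [KW]
  have h1 : ∑ k ∈ Finset.range n, DW k y
      = ∑ i ∈ Finset.range n, ((n - 1 - i : ℕ) : ℝ) * walsh i y := by
    rw [← sum_sum_range (fun i => walsh i y) n]
    rfl
  rw [KW, h1, mul_comm, div_mul_cancel₀]
  exact Nat.cast_ne_zero.2 (by omega)

lemma range_filter_eq_Ico (a q : ℕ) :
    (Finset.range q).filter (fun i => a ≤ i) = Finset.Ico a q := by
  ext i
  simp only [Finset.mem_filter, Finset.mem_range, Finset.mem_Ico]
  omega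

end Aux3

/-- `|σ_{q_m}^κ f_m(x)| = (q_{m−1}/q_m) |K_{q_{m−1}}^w(τ_{2m}(x))|`. -/
theorem sigma_qm_of_fm (m : ℕ) (hm : 1 ≤ m) (x : G) :
    |sigmaK (fm m) (qA m) x| =
      (qA (m - 1) : ℝ) / (qA m : ℝ) * |KW (qA (m - 1)) (tau (2 * m) x)| := by
  obtain ⟨m', rfl⟩ : ∃ m', m = m' + 1 := ⟨m - 1, by omega⟩
  simp only [Nat.add_sub_cancel]
  set A := 2 * (m' + 1) with hA
  set q := qA (m' + 1) with hq
  set q' := qA m' with hq'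
  set y := tau A x with hy
  have hApow : (2 : ℕ) ^ A = 4 ^ (m' + 1) := by rw [hA, pow_mul]; norm_num
  have h44 : (4 : ℕ) ^ (m' + 1) = 4 * 4 ^ m' := by ring
  have hq'lt : q' < 2 ^ A := by have := qA_lt m'; omega
  have hqsplit : q = 2 ^ A + q' := by have := qA_succ m'; omega
  have hqlt : q < 2 ^ (A + 1) := by
    have h2 : (2 : ℕ) ^ (A + 1) = 2 ^ A + 2 ^ A := by ring
    omega
  have hqpos : 0 < q := by have := Nat.two_pow_pos A; omega
  have step1 : ∑ j ∈ Finset.range q, SK (fm (m' + 1)) j x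
      = ∑ i ∈ Finset.range q,
          ((q - 1 - i : ℕ) : ℝ) * (coefK (fm (m' + 1)) i * kacz i x) :=
    sum_sum_range (fun i => coefK (fm (m' + 1)) i * kacz i x) q
  have step2 : ∑ i ∈ Finset.range q,
          ((q - 1 - i : ℕ) : ℝ) * (coefK (fm (m' + 1)) i * kacz i x)
      = ∑ i ∈ Finset.Ico (2 ^ A) q, ((q - 1 - i : ℕ) : ℝ) * kacz i x := by
    rw [← range_filter_eq_Ico, Finset.sum_filter]
    refine Finset.sum_congr rfl fun i hi => ?_
    simp only [Finset.mem_range] at hi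
    have hilt : i < 2 ^ (2 * (m' + 1) + 1) := by rw [← hA]; omega
    rw [coefK_fm (m' + 1) hilt, ← hA]
    by_cases hge : 2 ^ A ≤ i
    · rw [if_pos hge, if_pos hge]
      ring
    · rw [if_neg hge, if_neg hge]
      ring
  have step3 : ∑ i ∈ Finset.Ico (2 ^ A) q, ((q - 1 - i : ℕ) : ℝ) * kacz i x
      = rad A x * ((q' : ℝ) * KW q' y) := by
    rw [Finset.sum_Ico_eq_sum_range]
    have hq2 : q - 2 ^ A = q' := by omega
    rw [hq2, KW_mul, Finset.mul_sum]
    refine Finset.sum_congr rfl fun i hi => ?_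
    simp only [Finset.mem_range] at hi
    have hi2 : i < 2 ^ A := by omega
    rw [kacz_shift hi2 x, ← hy]
    have hco : q - 1 - (2 ^ A + i) = q' - 1 - i := by omega
    rw [hco]
    ring
  rw [sigmaK, step1, step2, step3]
  rw [abs_div, abs_mul, abs_rad, one_mul, abs_mul, Nat.abs_cast, Nat.abs_cast]
  ring
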